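/- arXiv:1610.05914 — 3 statements merged into one kernel-verified Lean document; each statement's English description precedes it below -/
import Mathlib

section
/- Let π be a set of primes, let H be a finite π'-group acting on a finite abelian π-group G, and suppose G = A × B where A is invariant under the action of H. Then there exists a subgroup K of G such that G = A × K and both A and K are H-invariant. -/
section MaschkeAux

variable {G : Type*} [CommGroup G] (A B : Subgroup G)

/-- The projection onto `A` along `B`, as a bare function, via choice. -/
private noncomputable def projFun (h2 : A ⊔ B = ⊤) (g : G) : G :=
  (Subgroup.mem_sup.mp (show g ∈ A ⊔ B from h2 ▸ Subgroup.mem_top g)).choose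

private lemma projFun_mem (h2 : A ⊔ B = ⊤) (g : G) : projFun A B h2 g ∈ A :=
  (Subgroup.mem_sup.mp (show g ∈ A ⊔ B from h2 ▸ Subgroup.mem_top g)).choose_spec.1

private lemma projFun_spec (h2 : A ⊔ B = ⊤) (g : G) :
    ∃ b ∈ B, projFun A B h2 g * b = g :=
  (Subgroup.mem_sup.mp (show g ∈ A ⊔ B from h2 ▸ Subgroup.mem_top g)).choose_spec.2

private lemma projFun_eq (h1 : A ⊓ B = ⊥) (h2 : A ⊔ B = ⊤) {g a b : G}
    (ha : a ∈ A) (hb : b ∈ B) (hab : a * b = g) : projFun A B h2 g = a := by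
  obtain ⟨b', hb', hb'eq⟩ := projFun_spec A B h2 g
  have hp : projFun A B h2 g ∈ A := projFun_mem A B h2 g
  have heq : projFun A B h2 g * a⁻¹ = b * b'⁻¹ := by
    have h : projFun A B h2 g * b' = a * b := hb'eq.trans hab.symm
    have hcalc : projFun A B h2 g * a⁻¹ * (a * b') = b * b'⁻¹ * (a * b') := by
      calc projFun A B h2 g * a⁻¹ * (a * b') = projFun A B h2 g * b' := by group
        _ = a * b := h
        _ = b * b'⁻¹ * (a * b') := by rw [mul_comm a b, mul_comm a b']; group
    exact mul_right_cancel hcalc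
  have key : projFun A B h2 g * a⁻¹ ∈ A ⊓ B := by
    rw [Subgroup.mem_inf]
    refine ⟨mul_mem hp (inv_mem ha), ?_⟩
    rw [heq]
    exact mul_mem hb (inv_mem hb')
  rw [h1, Subgroup.mem_bot] at key
  exact mul_inv_eq_one.mp key

private lemma projFun_self (h1 : A ⊓ B = ⊥) (h2 : A ⊔ B = ⊤) {a : G} (ha : a ∈ A) :
    projFun A B h2 a = a :=
  projFun_eq A B h1 h2 ha (one_mem B) (mul_one a)

private lemma projFun_mul (h1 : A ⊓ B = ⊥) (h2 : A ⊔ B = ⊤) (g₁ g₂ : G) :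
    projFun A B h2 (g₁ * g₂) = projFun A B h2 g₁ * projFun A B h2 g₂ := by
  obtain ⟨b₁, hb₁, hb₁eq⟩ := projFun_spec A B h2 g₁
  obtain ⟨b₂, hb₂, hb₂eq⟩ := projFun_spec A B h2 g₂
  refine projFun_eq A B h1 h2
    (mul_mem (projFun_mem A B h2 g₁) (projFun_mem A B h2 g₂)) (mul_mem hb₁ hb₂) ?_
  calc projFun A B h2 g₁ * projFun A B h2 g₂ * (b₁ * b₂)
      = projFun A B h2 g₁ * b₁ * (projFun A B h2 g₂ * b₂) :=
        mul_mul_mul_comm _ _ _ _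
    _ = g₁ * g₂ := by rw [hb₁eq, hb₂eq]

end MaschkeAux

/-- Maschke-type lemma: a `π'`-group `H` acting on a finite abelian `π`-group `G`;
if `G = A × B` (internally) with `A` an `H`-invariant subgroup, then there is an
`H`-invariant complement `K` to `A`. -/
theorem stmt4 (π : Set ℕ) (H G : Type*) [Group H] [Finite H] [CommGroup G] [Finite G]
    (hH : ∀ q : ℕ, q.Prime → q ∣ Nat.card H → q ∉ π)
    (hG : ∀ q : ℕ, q.Prime → q ∣ Nat.card G → q ∈ π)
    (φ : H →* MulAut G) (A B : Subgroup G)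
    (hAB1 : A ⊓ B = ⊥) (hAB2 : A ⊔ B = ⊤)
    (hA : ∀ h : H, ∀ a ∈ A, φ h a ∈ A) :
    ∃ K : Subgroup G, A ⊓ K = ⊥ ∧ A ⊔ K = ⊤ ∧ (∀ h : H, ∀ k ∈ K, φ h k ∈ K) := by
  classical
  haveI : Fintype H := Fintype.ofFinite H
  set N := Nat.card H with hN
  -- coprimality of |H| and |G|
  have hcop : Nat.Coprime N (Nat.card G) := by
    by_contra hc
    obtain ⟨q, hq, hqd⟩ := Nat.exists_prime_and_dvd hc
    exact hH q hq (hqd.trans (Nat.gcd_dvd_left _ _))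
      (hG q hq (hqd.trans (Nat.gcd_dvd_right _ _)))
  have pow_inj : ∀ g : G, g ^ N = 1 → g = 1 := by
    intro g hg
    have h1 : orderOf g ∣ N := orderOf_dvd_of_pow_eq_one hg
    have h2 : orderOf g ∣ Nat.card G := orderOf_dvd_natCard g
    have h3 := Nat.dvd_gcd h1 h2
    rw [Nat.coprime_iff_gcd_eq_one] at hcop
    rw [hcop] at h3
    exact orderOf_eq_one_iff.mp (Nat.dvd_one.mp h3)
  set p : G → G := projFun A B hAB2 with hp
  set Tfun : G → G := fun g => ∏ h : H, φ h (p ((φ h)⁻¹ g)) with hT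
  have Tmul : ∀ g₁ g₂, Tfun (g₁ * g₂) = Tfun g₁ * Tfun g₂ := by
    intro g₁ g₂
    simp only [hT, map_mul, projFun_mul A B hAB1 hAB2, hp, ← Finset.prod_mul_distrib]
  have Tone : Tfun 1 = 1 := by
    have h := Tmul 1 1
    rw [mul_one] at h
    exact (left_eq_mul.mp h)
  have Tmem : ∀ g, Tfun g ∈ A := by
    intro g
    refine Subgroup.prod_mem A fun h _ => hA h _ ?_
    exact projFun_mem A B hAB2 _
  have Tinv_mem : ∀ h : H, ∀ a ∈ A, (φ h)⁻¹ a ∈ A := by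
    intro h a ha
    have : (φ h)⁻¹ a = φ h⁻¹ a := by rw [map_inv]
    rw [this]
    exact hA h⁻¹ a ha
  have TA : ∀ a ∈ A, Tfun a = a ^ N := by
    intro a ha
    have : ∀ h : H, φ h (p ((φ h)⁻¹ a)) = a := by
      intro h
      have hmem : (φ h)⁻¹ a ∈ A := Tinv_mem h a ha
      rw [hp, projFun_self A B hAB1 hAB2 hmem, MulAut.inv_def]
      exact (φ h).apply_symm_apply a
    simp only [hT, this, Finset.prod_const, Finset.card_univ, hN, Nat.card_eq_fintype_card]
  have Tequiv : ∀ (h₀ : H) (g : G), Tfun (φ h₀ g) = φ h₀ (Tfun g) := by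
    intro h₀ g
    have key : ∀ x : H, φ h₀ (φ x (p ((φ x)⁻¹ g)))
        = φ (h₀ * x) (p ((φ (h₀ * x))⁻¹ (φ h₀ g))) := by
      intro x
      have h1 : (φ (h₀ * x))⁻¹ (φ h₀ g) = (φ x)⁻¹ g := by
        simp [map_mul, mul_inv_rev, MulAut.mul_apply]
      rw [h1, map_mul]
      rfl
    calc Tfun (φ h₀ g) = ∏ h : H, φ h (p ((φ h)⁻¹ (φ h₀ g))) := rfl
      _ = ∏ x : H, φ (h₀ * x) (p ((φ (h₀ * x))⁻¹ (φ h₀ g))) :=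
          (Fintype.prod_equiv (Equiv.mulLeft h₀)
            (fun x => φ (h₀ * x) (p ((φ (h₀ * x))⁻¹ (φ h₀ g))))
            (fun h => φ h (p ((φ h)⁻¹ (φ h₀ g)))) (fun x => rfl)).symm
      _ = ∏ x : H, φ h₀ (φ x (p ((φ x)⁻¹ g))) := by
          exact Finset.prod_congr rfl fun x _ => (key x).symm
      _ = φ h₀ (Tfun g) := by rw [← map_prod]
  -- the averaged projection as a `MonoidHom`
  let T : G →* G := { toFun := Tfun, map_one' := Tone, map_mul' := Tmul }
  refine ⟨T.ker, ?_, ?_, ?_⟩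
  · -- A ⊓ ker T = ⊥
    rw [eq_bot_iff]
    rintro x ⟨hxA, hxK⟩
    have hx : Tfun x = 1 := hxK
    rw [TA x hxA] at hx
    exact Subgroup.mem_bot.mpr (pow_inj x hx)
  · -- A ⊔ ker T = ⊤
    rw [eq_top_iff]
    intro g _
    -- find a ∈ A with a ^ N = Tfun g, using that x ↦ x^N is bijective on A
    have hsurj : ∃ a : A, (a : G) ^ N = Tfun g := by
      have hinj : Function.Injective (fun a : A => (⟨(a : G) ^ N, pow_mem a.2 N⟩ : A)) := by
        intro a b hab
        have h1 : (a : G) ^ N = (b : G) ^ N := congrArg Subtype.val hab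
        have h2 : ((a : G) / (b : G)) ^ N = 1 := by
          rw [div_pow, h1, div_self']
        have := pow_inj _ h2
        exact Subtype.ext (div_eq_one.mp this)
      have hsur := Finite.injective_iff_surjective.mp hinj
      obtain ⟨a, ha⟩ := hsur ⟨Tfun g, Tmem g⟩
      exact ⟨a, congrArg Subtype.val ha⟩
    obtain ⟨a, haN⟩ := hsurj
    have hker : (a : G)⁻¹ * g ∈ T.ker := by
      rw [MonoidHom.mem_ker]
      show Tfun ((a : G)⁻¹ * g) = 1
      have hinv : Tfun ((a : G)⁻¹) = (Tfun (a : G))⁻¹ := map_inv T _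
      rw [Tmul, hinv, TA _ a.2, haN, inv_mul_cancel]
    exact Subgroup.mem_sup.mpr ⟨a, a.2, (a : G)⁻¹ * g, hker, by group⟩
  · -- H-invariance of ker T
    intro h k hk
    rw [MonoidHom.mem_ker] at hk ⊢
    show Tfun (φ h k) = 1
    rw [Tequiv h k]
    have : Tfun k = 1 := hk
    rw [this, map_one]
end

section
/- Let V be a d-dimensional vector space over the field F_p and let H ≤ GL(V) be a cyclic subgroup such that V is a homogeneous F_pH-module, i.e., V is the direct sum of t pairwise isomorphic faithful irreducible F_pH-submodules each of dimension f (where d = tf). Then the normalizer of H in GL(V) equals ΓL(t, p^f), viewing V as a t-dimensional space over F_{p^f}. -/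
/-!
Let `K ⊆ End(V)` be the `𝔽_p`-subalgebra spanned by `H`. As `H` is abelian, every `a ∈ K`
commutes with `H`, so `ker a` meets each irreducible `Wᵢ` in `0` or in `Wᵢ`; and since the `Wᵢ`
are pairwise `H`-isomorphic, `ker a` cannot contain one `Wᵢ` without containing all of them.
Hence `K` acts on each `Wᵢ` without zero divisors: the finite ring `K` is a field, every
`Wᵢ = K wᵢ`, the `wᵢ` form a `K`-basis of `V`, and `K ≅ 𝔽_{p^f}` because `dim Wᵢ = f`.
Conjugation by an element of `N(H)` preserves `K`, so normalising elements are `K`-semilinear.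
Conversely `H` is the group of `|H|`-th roots of unity of the field `K`, which every ring
automorphism of `K` preserves, so `K`-semilinear automorphisms normalise `H`. Thus `N(H)` is the
group of `K`-semilinear automorphisms of `V ≅ K^t`, i.e. `ΓL(t, p^f)`.
-/


section RepDefs

variable {p : ℕ} {V : Type*} [AddCommGroup V] [Module (ZMod p) V]

/-- `W` is invariant under the subgroup `H ≤ GL(V)`. -/
def SubInvariant (H : Subgroup (V ≃ₗ[ZMod p] V)) (W : Submodule (ZMod p) V) : Prop :=
  ∀ g ∈ H, ∀ v ∈ W, g v ∈ W

/-- `W` is an irreducible `H`-submodule. -/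
def SubIrreducible (H : Subgroup (V ≃ₗ[ZMod p] V)) (W : Submodule (ZMod p) V) : Prop :=
  W ≠ ⊥ ∧ ∀ U : Submodule (ZMod p) V, U ≤ W → SubInvariant H U → U = ⊥ ∨ U = W

/-- `A` and `B` are isomorphic as `H`-modules: some `H`-equivariant linear endomorphism of
`V` maps `A` onto `B` injectively. -/
def SubHIso (H : Subgroup (V ≃ₗ[ZMod p] V)) (A B : Submodule (ZMod p) V) : Prop :=
  ∃ φ : V →ₗ[ZMod p] V, (∀ g ∈ H, ∀ v : V, φ (g v) = g (φ v)) ∧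
    Submodule.map φ A = B ∧ ∀ v ∈ A, φ v = 0 → v = 0

/-- `H` acts fixed-point-freely on `V`. -/
def SubFPF (H : Subgroup (V ≃ₗ[ZMod p] V)) : Prop :=
  ∀ g ∈ H, g ≠ 1 → ∀ v : V, g v = v → v = 0

end RepDefs

/-- The semilinear group `ΓL(t, p^f)`: all additive permutations of `(F_{p^f})^t` that are
semilinear with respect to some field automorphism `τ` of `F_{p^f}`. -/
def GammaL (p f t : ℕ) [Fact p.Prime] :
    Subgroup (Equiv.Perm (Fin t → GaloisField p f)) where
  carrier := {σ | (∀ x y, σ (x + y) = σ x + σ y) ∧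
    ∃ τ : GaloisField p f ≃+* GaloisField p f,
      ∀ (c : GaloisField p f) (x : Fin t → GaloisField p f), σ (c • x) = τ c • σ x}
  one_mem' := ⟨fun _ _ => rfl, ⟨RingEquiv.refl _, fun _ _ => rfl⟩⟩
  mul_mem' := by
    rintro σ₁ σ₂ ⟨h1, τ₁, hτ₁⟩ ⟨h2, τ₂, hτ₂⟩
    refine ⟨fun x y => ?_, ⟨τ₂.trans τ₁, fun c x => ?_⟩⟩
    · simp only [Equiv.Perm.mul_apply, h2, h1]
    · simp only [Equiv.Perm.mul_apply, hτ₂, hτ₁, RingEquiv.coe_trans, Function.comp_apply]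
  inv_mem' := by
    rintro σ ⟨h1, τ, hτ⟩
    refine ⟨fun x y => σ.injective ?_, ⟨τ.symm, fun c x => σ.injective ?_⟩⟩
    · simp [h1]
    · simp [hτ, RingEquiv.apply_symm_apply]


section Semilinear

variable (K V : Type*) [Semiring K] [AddCommMonoid V] [Module K V]

def semilinearPerms : Subgroup (Equiv.Perm V) where
  carrier := {σ | (∀ x y, σ (x + y) = σ x + σ y) ∧
    ∃ τ : K ≃+* K, ∀ (c : K) (x : V), σ (c • x) = τ c • σ x}
  one_mem' := ⟨fun _ _ => rfl, RingEquiv.refl K, fun _ _ => rfl⟩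
  mul_mem' := by
    rintro σ₁ σ₂ ⟨hadd₁, τ₁, hτ₁⟩ ⟨hadd₂, τ₂, hτ₂⟩
    exact ⟨fun x y => by simp only [Equiv.Perm.mul_apply, hadd₂, hadd₁], τ₂.trans τ₁,
      fun c x => by simp only [Equiv.Perm.mul_apply, hτ₂, hτ₁, RingEquiv.coe_trans,
        Function.comp_apply]⟩
  inv_mem' := by
    rintro σ ⟨hadd, τ, hτ⟩
    exact ⟨fun x y => σ.injective (by simp [hadd]), τ.symm,
      fun c x => σ.injective (by simp [hτ])⟩

theorem gammaL_eq_semilinearPerms (p f t : ℕ) [Fact p.Prime] :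
    GammaL p f t = semilinearPerms (GaloisField p f) (Fin t → GaloisField p f) :=
  rfl

variable {K V} {L W : Type*} [Semiring L] [AddCommMonoid W] [Module L W]

theorem symm_apply_smul_of_apply_smul (e : V ≃+ W) (φ : K ≃+* L)
    (he : ∀ (c : K) (x : V), e (c • x) = φ c • e x) (c : L) (y : W) :
    e.symm (c • y) = φ.symm c • e.symm y :=
  e.injective (by simp [he])

theorem permCongr_mem_semilinearPerms (e : V ≃+ W) (φ : K ≃+* L)
    (he : ∀ (c : K) (x : V), e (c • x) = φ c • e x) {σ : Equiv.Perm V}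
    (hσ : σ ∈ semilinearPerms K V) : e.toEquiv.permCongr σ ∈ semilinearPerms L W := by
  obtain ⟨hadd, τ, hτ⟩ := hσ
  refine ⟨fun x y => ?_, (φ.symm.trans τ).trans φ, fun c x => ?_⟩
  · simp [Equiv.permCongr_apply, hadd]
  · simp [Equiv.permCongr_apply, symm_apply_smul_of_apply_smul e φ he, hτ, he]

def semilinearPermsCongr (e : V ≃+ W) (φ : K ≃+* L)
    (he : ∀ (c : K) (x : V), e (c • x) = φ c • e x) :
    semilinearPerms K V ≃* semilinearPerms L W where
  toFun σ := ⟨e.toEquiv.permCongr σ, permCongr_mem_semilinearPerms e φ he σ.2⟩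
  invFun σ := ⟨e.symm.toEquiv.permCongr σ,
    permCongr_mem_semilinearPerms e.symm φ.symm (symm_apply_smul_of_apply_smul e φ he) σ.2⟩
  left_inv σ := Subtype.ext (Equiv.ext fun x => by simp [Equiv.permCongr_apply])
  right_inv σ := Subtype.ext (Equiv.ext fun x => by simp [Equiv.permCongr_apply])
  map_mul' σ τ := Subtype.ext (Equiv.ext fun x => by simp [Equiv.permCongr_apply])

noncomputable def semilinearPermsEquivPi {ι : Type*} [Finite ι] (b : Module.Basis ι K V)
    (φ : K ≃+* L) : semilinearPerms K V ≃* semilinearPerms L (ι → L) :=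
  semilinearPermsCongr (b.equivFun.toAddEquiv.trans (AddEquiv.piCongrRight fun _ => φ.toAddEquiv))
    φ fun c x => by ext; simp

end Semilinear

section Envelope

variable {R V : Type*} [CommRing R] [AddCommGroup V] [Module R V]

def envelope (H : Subgroup (V ≃ₗ[R] V)) : Subalgebra R (Module.End R V) :=
  Algebra.adjoin R (LinearEquiv.automorphismGroup.toLinearMapMonoidHom '' H)

variable {H : Subgroup (V ≃ₗ[R] V)}

theorem coe_mem_envelope {g : V ≃ₗ[R] V} (hg : g ∈ H) : (g : Module.End R V) ∈ envelope H :=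
  Algebra.subset_adjoin ⟨g, hg, rfl⟩

variable (H) in
def toEnvelope : H →* envelope H where
  toFun g := ⟨g, coe_mem_envelope g.2⟩
  map_one' := rfl
  map_mul' _ _ := rfl

@[simp]
theorem coe_toEnvelope (g : H) : (toEnvelope H g : Module.End R V) = g :=
  rfl

theorem toEnvelope_injective : Function.Injective (toEnvelope H) := fun _ _ h =>
  Subtype.ext (LinearEquiv.toLinearMap_injective (congrArg Subtype.val h))

open scoped IsMulCommutative in
theorem commute_of_mem_envelope [IsMulCommutative H] {a : Module.End R V} (ha : a ∈ envelope H)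
    {g : V ≃ₗ[R] V} (hg : g ∈ H) : Commute a g := by
  refine (Algebra.commute_of_mem_adjoin_of_forall_mem_commute ha ?_).symm
  rintro _ ⟨h, hh, rfl⟩
  have : g * h = h * g := congrArg Subtype.val (mul_comm (⟨g, hg⟩ : H) ⟨h, hh⟩)
  exact congrArg LinearEquiv.toLinearMap this

theorem map_conjAlgEquiv_envelope {g : V ≃ₗ[R] V} (hg : g ∈ Subgroup.normalizer (H : Set _)) :
    (envelope H).map (g.conjAlgEquiv R : Module.End R V →ₐ[R] Module.End R V) = envelope H := by
  rw [Subgroup.mem_normalizer_iff_conj_image_eq] at hg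
  rw [envelope, AlgHom.map_adjoin, Set.image_image]
  conv_rhs => rw [← hg, Set.image_image]
  -- conjugating `h` in `End V` and in `GL(V)` agree definitionally
  rfl

theorem exists_semilinear_of_mem_normalizer {g : V ≃ₗ[R] V}
    (hg : g ∈ Subgroup.normalizer (H : Set _)) :
    ∃ τ : envelope H ≃+* envelope H, ∀ (a : envelope H) (v : V), g (a • v) = τ a • g v := by
  refine ⟨(((g.conjAlgEquiv R).subalgebraMap (envelope H)).trans
    (Subalgebra.equivOfEq _ _ (map_conjAlgEquiv_envelope hg))).toRingEquiv, fun a v => ?_⟩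
  simp [Subalgebra.smul_def]

end Envelope

section Homogeneous

variable {p : ℕ} {V : Type*} [AddCommGroup V] [Module (ZMod p) V] {H : Subgroup (V ≃ₗ[ZMod p] V)}

theorem SubInvariant.apply_mem_of_mem_envelope {U : Submodule (ZMod p) V}
    (hU : SubInvariant H U) {a : Module.End (ZMod p) V} (ha : a ∈ envelope H) {v : V}
    (hv : v ∈ U) : a v ∈ U := by
  induction ha using Algebra.adjoin_induction generalizing v with
  | mem x hx => obtain ⟨g, hg, rfl⟩ := hx; exact hU g hg v hv
  | algebraMap r => exact U.smul_mem r hv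
  | add x y _ _ hx hy => exact U.add_mem (hx hv) (hy hv)
  | mul x y _ _ hx hy => exact hx (hy hv)

theorem SubIrreducible.disjoint_ker_or_le_ker {U : Submodule (ZMod p) V}
    (hirr : SubIrreducible H U) (hU : SubInvariant H U) {a : Module.End (ZMod p) V}
    (ha : ∀ g ∈ H, Commute a g) : Disjoint U (LinearMap.ker a) ∨ U ≤ LinearMap.ker a := by
  have hinv : SubInvariant H (U ⊓ LinearMap.ker a) := fun g hg v hv => by
    refine ⟨hU g hg v hv.1, LinearMap.mem_ker.mpr ?_⟩
    have hag := LinearMap.congr_fun (ha g hg) v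
    simp only [Module.End.mul_apply, LinearEquiv.coe_coe] at hag
    rw [hag, LinearMap.mem_ker.mp hv.2, map_zero]
  rcases hirr.2 _ inf_le_left hinv with h | h
  · exact Or.inl (disjoint_iff.mpr h)
  · exact Or.inr (inf_eq_left.mp h)

structure IsHomogeneousDecomposition {ι : Type*} (H : Subgroup (V ≃ₗ[ZMod p] V))
    (W : ι → Submodule (ZMod p) V) : Prop where
  iSup_eq_top : ⨆ i, W i = ⊤
  iSupIndep : iSupIndep W
  invariant : ∀ i, SubInvariant H (W i)
  irreducible : ∀ i, SubIrreducible H (W i)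
  iso : ∀ i j, SubHIso H (W i) (W j)

namespace IsHomogeneousDecomposition

variable {ι : Type*} {W : ι → Submodule (ZMod p) V} (hW : IsHomogeneousDecomposition H W)
include hW

theorem eq_zero_of_le_ker {a : Module.End (ZMod p) V} (ha : a ∈ envelope H) {i : ι}
    (hker : W i ≤ LinearMap.ker a) : a = 0 := by
  rw [← LinearMap.ker_eq_top, eq_top_iff, ← hW.iSup_eq_top, iSup_le_iff]
  intro j v hv
  obtain ⟨φ, hφ, hmap, hinj⟩ := hW.iso j i
  have hcomm : Commute φ a := Algebra.commute_of_mem_adjoin_of_forall_mem_commute ha <| by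
    rintro _ ⟨g, hg, rfl⟩
    exact LinearMap.ext (hφ g hg)
  refine hinj _ ((hW.invariant j).apply_mem_of_mem_envelope ha hv) ?_
  rw [← Module.End.mul_apply, hcomm.eq, Module.End.mul_apply]
  exact hker (hmap ▸ Submodule.mem_map_of_mem hv)

theorem envelope_smul_eq_zero_iff [IsMulCommutative H] {a : envelope H} {i : ι} {v : V}
    (hv : v ∈ W i) : a • v = 0 ↔ a = 0 ∨ v = 0 := by
  refine ⟨fun hav => or_iff_not_imp_left.mpr fun ha0 => ?_, ?_⟩
  · have hdisj := ((hW.irreducible i).disjoint_ker_or_le_ker (hW.invariant i)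
      fun _ hg => commute_of_mem_envelope a.2 hg).resolve_right
      fun hle => ha0 (Subtype.ext (hW.eq_zero_of_le_ker a.2 hle))
    exact Submodule.disjoint_def.mp hdisj v hv hav
  · rintro (rfl | rfl) <;> simp

theorem isDomain_envelope [IsMulCommutative H] [Nonempty ι] : IsDomain (envelope H) := by
  obtain ⟨i⟩ := ‹Nonempty ι›
  obtain ⟨w, hw, hw0⟩ := Submodule.exists_mem_ne_zero_of_ne_bot (hW.irreducible i).1
  have : Nontrivial (envelope H) :=
    ⟨⟨1, 0, fun h => hw0 (by simpa [h] using (one_smul (envelope H) w).symm)⟩⟩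
  have : NoZeroDivisors (envelope H) := ⟨fun {a b} hab => by
    have hbw : b • w ∈ W i := (hW.invariant i).apply_mem_of_mem_envelope b.2 hw
    have := (hW.envelope_smul_eq_zero_iff hbw).mp (by rw [← mul_smul, hab, zero_smul])
    simpa [hW.envelope_smul_eq_zero_iff hw, hw0] using this⟩
  exact NoZeroDivisors.to_isDomain _

theorem restrictScalars_span_singleton {i : ι} {w : V} (hw : w ∈ W i) (hw0 : w ≠ 0) :
    (Submodule.span (envelope H) {w}).restrictScalars (ZMod p) = W i := by
  refine ((hW.irreducible i).2 _ ?_ ?_).resolve_left ?_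
  · intro v hv
    obtain ⟨a, rfl⟩ := Submodule.mem_span_singleton.mp hv
    exact (hW.invariant i).apply_mem_of_mem_envelope a.2 hw
  · intro g hg v hv
    obtain ⟨a, rfl⟩ := Submodule.mem_span_singleton.mp hv
    exact Submodule.mem_span_singleton.mpr ⟨toEnvelope H ⟨g, hg⟩ * a, mul_smul _ _ w⟩
  · intro h
    have hw' : w ∈ (Submodule.span (envelope H) {w}).restrictScalars (ZMod p) :=
      Submodule.mem_span_singleton_self w
    exact hw0 ((Submodule.mem_bot _).mp (h ▸ hw'))

theorem nonempty_basis [IsMulCommutative H] : Nonempty (Module.Basis ι (envelope H) V) := by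
  choose w hw hw0 using fun i => Submodule.exists_mem_ne_zero_of_ne_bot (hW.irreducible i).1
  have hspan : ∀ i, (Submodule.span (envelope H) {w i}).restrictScalars (ZMod p) = W i :=
    fun i => hW.restrictScalars_span_singleton (hw i) (hw0 i)
  have hli : LinearIndependent (envelope H) w := by
    refine Ideal.iSupIndep.linearIndependent' (fun i => ?_) fun i => ?_
    · rw [← Submodule.disjoint_restrictScalars_iff (ZMod p)]
      simpa [Submodule.restrictScalars_iSup, hspan] using hW.iSupIndep i
    · ext a
      simp [Ideal.mem_torsionOf_iff, hW.envelope_smul_eq_zero_iff (hw i), hw0]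
  refine ⟨Module.Basis.mk hli
    (top_le_iff.mpr (Submodule.restrictScalars_injective (ZMod p) _ _ ?_))⟩
  simp [Submodule.span_range_eq_iSup, Submodule.restrictScalars_iSup, hspan, hW.iSup_eq_top]

theorem finrank_envelope [IsMulCommutative H] (i : ι) :
    Module.finrank (ZMod p) (envelope H) = Module.finrank (ZMod p) (W i) := by
  obtain ⟨w, hw, hw0⟩ := Submodule.exists_mem_ne_zero_of_ne_bot (hW.irreducible i).1
  let φ := (LinearMap.toSpanSingleton (envelope H) V w).restrictScalars (ZMod p)
  have hφ : Function.Injective φ := by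
    rw [← LinearMap.ker_eq_bot, LinearMap.ker_eq_bot']
    intro a ha
    simpa [φ, hW.envelope_smul_eq_zero_iff hw, hw0] using ha
  have hrange : LinearMap.range φ = W i := by
    rw [← hW.restrictScalars_span_singleton hw hw0, LinearMap.range_restrictScalars,
      LinearMap.span_singleton_eq_range]
  rw [← LinearMap.finrank_range_of_inj hφ, hrange]

end IsHomogeneousDecomposition

end Homogeneous

theorem mem_range_of_pow_card_eq_one {G L : Type*} [Group G] [Finite G] [CommRing L] [IsDomain L]
    {j : G →* L} (hj : Function.Injective j) {x : L} (hx : x ^ Nat.card G = 1) :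
    x ∈ Set.range j := by
  classical
  have : Fintype G := Fintype.ofFinite G
  have hpos : 0 < Nat.card G := Nat.card_pos
  have hsub : Finset.univ.image j ⊆ Polynomial.nthRootsFinset (Nat.card G) (1 : L) := by
    intro y hy
    obtain ⟨g, -, rfl⟩ := Finset.mem_image.mp hy
    rw [Polynomial.mem_nthRootsFinset hpos, ← map_pow, pow_card_eq_one', map_one]
  have hcard : (Polynomial.nthRootsFinset (Nat.card G) (1 : L)).card ≤
      (Finset.univ.image j).card := by
    rw [Finset.card_image_of_injective _ hj, Finset.card_univ, ← Nat.card_eq_fintype_card]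
    exact (Multiset.toFinset_card_le _).trans (Polynomial.card_nthRoots _ _)
  have hx' : x ∈ Finset.univ.image j :=
    Finset.eq_of_subset_of_card_le hsub hcard ▸ (Polynomial.mem_nthRootsFinset hpos 1).mpr hx
  obtain ⟨g, -, rfl⟩ := Finset.mem_image.mp hx'
  exact ⟨g, rfl⟩

section Normalizer

variable {n : ℕ} {V : Type*} [AddCommGroup V] [Module (ZMod n) V] {H : Subgroup (V ≃ₗ[ZMod n] V)}

theorem mul_mul_inv_mem_of_toPerm_mem_semilinearPerms [Finite H] (hK : IsField (envelope H))
    {g : V ≃ₗ[ZMod n] V} (hg : MulAction.toPerm g ∈ semilinearPerms (envelope H) V)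
    {h : V ≃ₗ[ZMod n] V} (hh : h ∈ H) : g * h * g⁻¹ ∈ H := by
  let := hK.toField
  obtain ⟨-, τ, hτ⟩ := hg
  -- `H` is the whole group of `|H|`-th roots of unity of the field `envelope H`.
  obtain ⟨h', hh'⟩ : τ (toEnvelope H ⟨h, hh⟩) ∈ Set.range (toEnvelope H) :=
    mem_range_of_pow_card_eq_one toEnvelope_injective <| by
      rw [← map_pow, ← map_pow, pow_card_eq_one', map_one, map_one]
  convert h'.2
  ext v
  have := hτ (toEnvelope H ⟨h, hh⟩) (g⁻¹ v)
  rw [← hh'] at this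
  simpa [Subalgebra.smul_def] using this

theorem map_toPermHom_normalizer [Finite H] (hK : IsField (envelope H)) :
    (Subgroup.normalizer (H : Set (V ≃ₗ[ZMod n] V))).map (MulAction.toPermHom _ V) =
      semilinearPerms (envelope H) V := by
  ext σ
  constructor
  · rintro ⟨g, hg, rfl⟩
    exact ⟨map_add g, exists_semilinear_of_mem_normalizer hg⟩
  · intro hσ
    let g : V ≃ₗ[ZMod n] V :=
      LinearEquiv.ofBijective ((AddMonoidHom.mk' σ hσ.1).toZModLinearMap n) σ.bijective
    have hgσ : MulAction.toPermHom _ V g = σ := Equiv.ext fun _ => rfl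
    refine ⟨g, Subgroup.mem_normalizer_iff.mpr fun h => ⟨fun hh => ?_, fun hh => ?_⟩, hgσ⟩
    · rw [← hgσ] at hσ
      exact mul_mul_inv_mem_of_toPerm_mem_semilinearPerms hK hσ hh
    · have hg_inv : MulAction.toPermHom _ V g⁻¹ ∈ semilinearPerms (envelope H) V := by
        rw [map_inv, hgσ]
        exact inv_mem hσ
      simpa [mul_assoc] using mul_mul_inv_mem_of_toPerm_mem_semilinearPerms hK hg_inv hh

noncomputable def normalizerEquivSemilinearPerms [Finite H] (hK : IsField (envelope H)) :
    Subgroup.normalizer (H : Set (V ≃ₗ[ZMod n] V)) ≃* semilinearPerms (envelope H) V :=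
  ((Subgroup.normalizer _).equivMapOfInjective _ MulAction.toPerm_injective).trans
    (MulEquiv.subgroupCongr (map_toPermHom_normalizer hK))

end Normalizer

theorem stmt5_general (p f t : ℕ) [Fact p.Prime] (ht : 0 < t)
    (V : Type*) [AddCommGroup V] [Module (ZMod p) V] [Module.Finite (ZMod p) V]
    (H : Subgroup (V ≃ₗ[ZMod p] V)) (hcyc : IsCyclic H)
    (W : Fin t → Submodule (ZMod p) V)
    (hsup : ⨆ i, W i = ⊤)
    (hindep : iSupIndep W)
    (hinv : ∀ i, SubInvariant H (W i))
    (hirr : ∀ i, SubIrreducible H (W i))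
    (hfr : ∀ i, Module.finrank (ZMod p) (W i) = f)
    (hiso : ∀ i j, SubHIso H (W i) (W j)) :
    Nonempty (Subgroup.normalizer (H : Set (V ≃ₗ[ZMod p] V)) ≃* GammaL p f t) := by
  have hW : IsHomogeneousDecomposition H W := ⟨hsup, hindep, hinv, hirr, hiso⟩
  have : IsCyclic H := hcyc
  have : Nonempty (Fin t) := ⟨⟨0, ht⟩⟩
  have : Finite (Module.End (ZMod p) V) := Module.finite_of_finite (ZMod p)
  have : Finite (V ≃ₗ[ZMod p] V) := Finite.of_injective _ LinearEquiv.toLinearMap_injective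
  have : IsDomain (envelope H) := hW.isDomain_envelope
  have hK : IsField (envelope H) := Finite.isDomain_to_isField _
  obtain ⟨b⟩ := hW.nonempty_basis
  have hcard : Nat.card (envelope H) = p ^ f := by
    rw [Module.natCard_eq_pow_finrank (K := ZMod p), Nat.card_zmod, hW.finrank_envelope ⟨0, ht⟩,
      hfr]
  let := hK.toField
  rw [gammaL_eq_semilinearPerms]
  exact ⟨(normalizerEquivSemilinearPerms hK).trans
    (semilinearPermsEquivPi b (GaloisField.algEquivGaloisField p f hcard).toRingEquiv)⟩

/-- Let `V = F_p^d` and let `H ≤ GL(V)` be cyclic of order `n` acting fixed-point-freely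
(so `V ⋊ H` is Frobenius), such that `V` is a homogeneous `F_pH`-module: the direct sum of
`t` pairwise isomorphic faithful irreducible `H`-submodules, each of dimension `f`
(so `d = t·f`). Then `N_{GL(V)}(H) ≅ ΓL(t, p^f)`. -/
theorem stmt5 (p n d f t : ℕ) [Fact p.Prime] (hd : d = t * f) (ht : 0 < t) (hf0 : 0 < f)
    (V : Type*) [AddCommGroup V] [Module (ZMod p) V] [Module.Finite (ZMod p) V]
    (hdim : Module.finrank (ZMod p) V = d)
    (H : Subgroup (V ≃ₗ[ZMod p] V)) (hcyc : IsCyclic H) (hn : Nat.card H = n)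
    (hfpf : SubFPF H)
    (W : Fin t → Submodule (ZMod p) V)
    (hsup : ⨆ i, W i = ⊤)
    (hindep : iSupIndep W)
    (hinv : ∀ i, SubInvariant H (W i))
    (hirr : ∀ i, SubIrreducible H (W i))
    (hfaith : ∀ i, ∀ g ∈ H, (∀ v ∈ W i, g v = v) → g = 1)
    (hfr : ∀ i, Module.finrank (ZMod p) (W i) = f)
    (hiso : ∀ i j, SubHIso H (W i) (W j)) :
    Nonempty (Subgroup.normalizer (H : Set (V ≃ₗ[ZMod p] V)) ≃* GammaL p f t) :=
  stmt5_general p f t ht V H hcyc W hsup hindep hinv hirr hfr hiso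
end

section
/- Let H be a cyclic group of order n acting faithfully and irreducibly on V = F_p^d. If two elements h^a and h^b of H afford isomorphic module structures on V (i.e., the map v ↦ action twisted by h^a is F_pH-isomorphic to that by h^b), then a ≡ b·p^k (mod n) for some integer k. -/
/-!
Irreducibility of `V` makes the minimal polynomial of `σ` irreducible, so `F_p[σ] ⊆ End V` is the
finite field `F_p[X]/(minpoly σ)`. Conjugation by `e` carries `σ^a` to `σ^b`, so both have the same
minimal polynomial, hence are conjugate under `Gal(F_p[σ]/F_p)`, which is generated by Frobenius:
`σ^a = (σ^b)^(p^k)`. Comparing exponents modulo the order `n` of `σ` gives the claim.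
-/

open Polynomial Pointwise

theorem Module.End.ker_aeval_mem_invtSubmodule {R M : Type*} [CommSemiring R] [AddCommMonoid M]
    [Module R M] (f : Module.End R M) (q : R[X]) :
    LinearMap.ker (aeval f q) ∈ f.invtSubmodule := by
  intro v hv
  have hcomm : aeval f q * f = f * aeval f q := by
    simpa using ((Commute.all X q).map (aeval f)).symm.eq
  simp only [Submodule.mem_comap, LinearMap.mem_ker] at hv ⊢
  rw [← Module.End.mul_apply, hcomm, Module.End.mul_apply, hv, map_zero]

theorem Module.End.irreducible_minpoly_of_forall_invtSubmodule {F V : Type*} [Field F]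
    [AddCommGroup V] [Module F V] [FiniteDimensional F V] [Nontrivial V]
    (f : Module.End F V) (hf : ∀ U ∈ f.invtSubmodule, U = ⊥ ∨ U = ⊤) :
    Irreducible (minpoly F f) := by
  have hint : IsIntegral F f := .of_finite F f
  refine (irreducible_of_monic (minpoly.monic hint) (minpoly.ne_one F f)).2
    fun q r hq hr hqr => ?_
  by_contra! hne
  -- With both factors proper, `ker (q f)` is a proper invariant subspace, nonzero as `q f * r f = 0`.
  have aeval_ne_zero {s t : F[X]} (hs : s.Monic) (hst : s * t = minpoly F f) (ht : t ≠ 1)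
      (ht' : t.Monic) : aeval f s ≠ 0 :=
    minpoly.aeval_ne_zero_of_dvdNotUnit_minpoly hint hs
      ⟨hs.ne_zero, t, ht'.isUnit_iff.not.mpr ht, hst.symm⟩
  have hq0 := aeval_ne_zero hq hqr hne.2 hr
  have hr0 := aeval_ne_zero hr (by rw [mul_comm, hqr]) hne.1 hq
  rcases hf _ (f.ker_aeval_mem_invtSubmodule q) with hbot | htop
  · refine hr0 (LinearMap.ext fun v => LinearMap.ker_eq_bot'.mp hbot _ ?_)
    rw [← Module.End.mul_apply, ← map_mul, hqr, minpoly.aeval, LinearMap.zero_apply]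
  · exact hq0 (LinearMap.ker_eq_top.mp htop)

theorem subInvariant_zpowers_of_mem_invtSubmodule {p : ℕ} [Fact p.Prime] {V : Type*}
    [AddCommGroup V] [Module (ZMod p) V] [Module.Finite (ZMod p) V] (σ : V ≃ₗ[ZMod p] V)
    {U : Submodule (ZMod p) V} (hU : U ∈ Module.End.invtSubmodule (σ : Module.End (ZMod p) V)) :
    SubInvariant (Subgroup.zpowers σ) U := by
  have hσ : σ ∈ MulAction.stabilizer (V ≃ₗ[ZMod p] V) U :=
    Submodule.eq_of_le_of_finrank_eq ((Module.End.mem_invtSubmodule_iff_map_le _).mp hU)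
      (σ.finrank_map_eq U)
  intro g hg v hv
  rw [← MulAction.mem_stabilizer_iff.mp (Subgroup.zpowers_le.mpr hσ hg)]
  exact Submodule.smul_mem_pointwise_smul v g U hv

theorem minpoly_eq_of_linearEquiv_conj {R V W : Type*} [CommRing R] [AddCommGroup V] [Module R V]
    [AddCommGroup W] [Module R W] (e : V ≃ₗ[R] W) {f : Module.End R V} {g : Module.End R W}
    (h : ∀ v, e (f v) = g (e v)) : minpoly R f = minpoly R g := by
  rw [← minpoly.algEquiv_eq (e.conjAlgEquiv R) f]
  congr 1
  ext w
  simp [h]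

theorem FiniteField.exists_eq_pow_card_pow_of_minpoly_eq {K L : Type*} [Field K] [Fintype K]
    [Field L] [Finite L] [Algebra K L] {y z : L} (h : minpoly K y = minpoly K z) :
    ∃ k : ℕ, y = z ^ Fintype.card K ^ k := by
  obtain ⟨g, rfl⟩ := (Normal.minpoly_eq_iff_mem_orbit L).mp h
  obtain ⟨k, rfl⟩ := (bijective_frobeniusAlgEquivOfAlgebraic_pow K L).2 g
  refine ⟨k, ?_⟩
  show (frobeniusAlgEquivOfAlgebraic K L ^ k.1) z = _
  rw [AlgEquiv.coe_pow, coe_frobeniusAlgEquivOfAlgebraic_iterate]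

theorem exists_pow_eq_pow_mul_card_pow_of_minpoly_eq {F A : Type*} [Field F] [Fintype F] [Ring A]
    [Nontrivial A] [Algebra F A] {x : A} (hx : IsIntegral F x) (hirr : Irreducible (minpoly F x))
    {a b : ℕ} (h : minpoly F (x ^ a) = minpoly F (x ^ b)) :
    ∃ k : ℕ, x ^ a = x ^ (b * Fintype.card F ^ k) := by
  have := Fact.mk hirr
  have := (minpoly.monic hx).finite_adjoinRoot
  have : Finite (AdjoinRoot (minpoly F x)) := Module.finite_of_finite F
  let θ : AdjoinRoot (minpoly F x) →ₐ[F] A :=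
    Ideal.Quotient.liftₐ _ (aeval x) fun q hq => by
      obtain ⟨c, rfl⟩ := Ideal.mem_span_singleton'.mp hq
      simp
  have hθ : θ (AdjoinRoot.root _) = x := aeval_X x
  have hinj : Function.Injective θ := θ.toRingHom.injective
  obtain ⟨k, hk⟩ := FiniteField.exists_eq_pow_card_pow_of_minpoly_eq
    (y := AdjoinRoot.root (minpoly F x) ^ a) (z := AdjoinRoot.root (minpoly F x) ^ b)
    (by rw [← minpoly.algHom_eq θ hinj, ← minpoly.algHom_eq θ hinj, map_pow, map_pow, hθ, h])
  exact ⟨k, by simpa [pow_mul, hθ] using congrArg θ hk⟩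

theorem stmt16_general (p n a b : ℕ) [Fact p.Prime]
    (V : Type*) [AddCommGroup V] [Module (ZMod p) V] [Module.Finite (ZMod p) V]
    [Nontrivial V]
    (σ : V ≃ₗ[ZMod p] V) (hord : orderOf σ = n)
    (hirr : ∀ U : Submodule (ZMod p) V, SubInvariant (Subgroup.zpowers σ) U →
      U = ⊥ ∨ U = ⊤)
    (e : V ≃ₗ[ZMod p] V) (he : ∀ v : V, e ((σ ^ a) v) = (σ ^ b) (e v)) :
    ∃ k : ℕ, a ≡ b * p ^ k [MOD n] := by
  let f : Module.End (ZMod p) V := σ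
  have hf : Irreducible (minpoly (ZMod p) f) := f.irreducible_minpoly_of_forall_invtSubmodule
    fun U hU => hirr U (subInvariant_zpowers_of_mem_invtSubmodule σ hU)
  have hpow (m : ℕ) : f ^ m = ((σ ^ m : V ≃ₗ[ZMod p] V) : Module.End (ZMod p) V) :=
    (map_pow LinearEquiv.automorphismGroup.toLinearMapMonoidHom σ m).symm
  have hconj : minpoly (ZMod p) (f ^ a) = minpoly (ZMod p) (f ^ b) :=
    minpoly_eq_of_linearEquiv_conj e fun v => by simpa [hpow] using he v
  obtain ⟨k, hk⟩ := exists_pow_eq_pow_mul_card_pow_of_minpoly_eq (.of_finite _ f) hf hconj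
  refine ⟨k, ?_⟩
  rw [← hord, ← pow_eq_pow_iff_modEq]
  rw [ZMod.card] at hk
  exact LinearEquiv.toLinearMap_injective (by simpa only [hpow] using hk)

/-- Let `H = ⟨σ⟩` be cyclic of order `n` (with `gcd(n,p) = 1`) acting faithfully and
irreducibly on `V = F_p^d`. If the module structures twisted by `σ^a` and `σ^b` are
isomorphic (an `F_p`-linear equivalence `e` with `e ∘ σ^a = σ^b ∘ e`), then
`a ≡ b·p^k (mod n)` for some `k`. -/
theorem stmt16 (p n a b : ℕ) [Fact p.Prime] (hpn : Nat.Coprime n p)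
    (V : Type*) [AddCommGroup V] [Module (ZMod p) V] [Module.Finite (ZMod p) V]
    [Nontrivial V]
    (σ : V ≃ₗ[ZMod p] V) (hord : orderOf σ = n)
    (hirr : ∀ U : Submodule (ZMod p) V, SubInvariant (Subgroup.zpowers σ) U →
      U = ⊥ ∨ U = ⊤)
    (e : V ≃ₗ[ZMod p] V) (he : ∀ v : V, e ((σ ^ a) v) = (σ ^ b) (e v)) :
    ∃ k : ℕ, a ≡ b * p ^ k [MOD n] :=
  stmt16_general p n a b V σ hord hirr e he
end
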